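/- arXiv:2309.11203 — 5 statements merged into one kernel-verified Lean document; each statement's English description precedes it below -/
import Mathlib

section
/- For every loopless matroid M on a finite ground set E, the maximal number of colors used by a Gallai coloring of M equals the rank of M. Precisely, rank(M) is the greatest element of the set of natural numbers k such that there exists a Gallai coloring ε of M whose image has exactly k elements (in particular some Gallai coloring uses exactly rank(M) colors, and no Gallai coloring uses more). -/
/-!
A Gallai coloring is exactly a coloring that is injective on no circuit. Choosing one element of
each color therefore gives a set containing no circuit, i.e. an independent set, so at most
`rank M` colors occur. Conversely, list a base as `b₁, …, bᵣ` and color `e` by the least `i` with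
`e ∈ cl {b₁, …, bᵢ}`; then `bᵢ` gets color `i`. If a circuit `X` had distinct colors, its element
`e` of largest color `i` would lie in `cl (X \ {e}) ⊆ cl {b₁, …, b_{i-1}}`, contradicting the
minimality of `i`; looplessness makes `X \ {e}` nonempty.
-/

/-- A circuit of a matroid: a minimal dependent set. -/
def IsCircuit {α : Type*} (M : Matroid α) (C : Set α) : Prop :=
  M.Dep C ∧ ∀ D ⊂ C, ¬ M.Dep D

/-- A Gallai coloring of a matroid: a coloring of the ground set such that every
circuit receives strictly fewer distinct colors than its size. -/
def IsGallaiColoring {α C : Type*} (M : Matroid α) (ε : α → C) : Prop :=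
  ∀ X, IsCircuit M X → (ε '' X).ncard < X.ncard

open Set

section

variable {α β : Type*} {M : Matroid α}

theorem isCircuit_iff_matroidIsCircuit {C : Set α} : IsCircuit M C ↔ M.IsCircuit C := by
  rw [Matroid.isCircuit_def, minimal_iff_forall_lt]
  rfl

theorem loopless_of_forall_isCircuit_ncard_ne_one [M.Finitary]
    (h : ∀ C, IsCircuit M C → C.ncard ≠ 1) : M.Loopless := by
  refine Matroid.loopless_iff_forall_isCircuit.2 fun C hC => ?_
  have := hC.finite.to_subtype
  rw [← one_lt_ncard_iff_nontrivial]
  have := (ncard_pos hC.finite).2 hC.nonempty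
  have := h C (isCircuit_iff_matroidIsCircuit.2 hC)
  omega

theorem isGallaiColoring_iff [M.Finitary] {ε : α → β} :
    IsGallaiColoring M ε ↔ ∀ C, M.IsCircuit C → ¬ InjOn ε C := by
  simp only [IsGallaiColoring, isCircuit_iff_matroidIsCircuit]
  refine forall₂_congr fun C hC => ⟨fun hlt hinj => hlt.ne hinj.ncard_image,
    fun hninj => (ncard_image_le hC.finite).lt_of_ne fun heq => ?_⟩
  exact hninj (injOn_of_ncard_image_eq heq hC.finite)

theorem IsGallaiColoring.ncard_image_ground_le [M.RankFinite] {ε : α → β}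
    (hε : IsGallaiColoring M ε) {B : Set α} (hB : M.IsBase B) : (ε '' M.E).ncard ≤ B.ncard := by
  obtain ⟨S, hSE, hS⟩ := exists_subset_bijOn M.E ε
  have hSindep : M.Indep S := by
    by_contra hdep
    obtain ⟨C, hCS, hC⟩ := ((M.not_indep_iff hSE).1 hdep).exists_isCircuit_subset
    exact isGallaiColoring_iff.1 hε C hC (hS.injOn.mono hCS)
  obtain ⟨B', hB', hSB'⟩ := hSindep.exists_isBase_superset
  calc (ε '' M.E).ncard = S.ncard := hS.image_eq ▸ hS.injOn.ncard_image
    _ ≤ B'.ncard := ncard_le_ncard hSB' hB'.finite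
    _ = B.ncard := hB'.ncard_eq_ncard_of_isBase hB

theorem isGallaiColoring_sInf_mem_of_monotone_isFlat [M.Finitary] [M.Loopless] {F : ℕ → Set α}
    (hF : Monotone F) (hflat : ∀ n, M.IsFlat (F n)) (hcover : ∀ e ∈ M.E, ∃ n, e ∈ F n) :
    IsGallaiColoring M fun e => sInf {n | e ∈ F n} := by
  refine isGallaiColoring_iff.2 fun X hX hinj => ?_
  set ε : α → ℕ := fun e => sInf {n | e ∈ F n}
  obtain ⟨e, heX, hmax⟩ := exists_max_image X ε hX.finite hX.nonempty
  have hlt : ∀ x ∈ X \ {e}, ε x < ε e := fun x hx =>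
    (hmax x hx.1).lt_of_ne fun h => hx.2 (hinj hx.1 heX h)
  have hsub : X \ {e} ⊆ F (ε e - 1) := fun x hx =>
    hF (Nat.le_sub_one_of_lt (hlt x hx)) (Nat.sInf_mem (hcover x (hX.subset_ground hx.1)))
  have heF : e ∈ F (ε e - 1) :=
    (hflat _).closure ▸ M.closure_subset_closure hsub (hX.mem_closure_sdiff_singleton_of_mem heX)
  obtain ⟨x, hxX, hxe⟩ := (Matroid.loopless_iff_forall_isCircuit.1 ‹_› X hX).exists_ne e
  have := hlt x ⟨hxX, hxe⟩
  have : ε e ≤ ε e - 1 := Nat.sInf_le heF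
  omega

theorem monotone_closure_setOf_mem_lt (M : Matroid α) (I : Set α) (ord : α → ℕ) :
    Monotone fun n => M.closure {x ∈ I | ord x < n} :=
  fun _ _ hmn => M.closure_subset_closure fun _ hx => ⟨hx.1, hx.2.trans_le hmn⟩

theorem Matroid.Indep.sInf_mem_closure_setOf_mem_lt {I : Set α} (hI : M.Indep I) {ord : α → ℕ}
    {b : α} (hb : b ∈ I) :
    sInf {n | b ∈ M.closure {x ∈ I | ord x < n}} = ord b + 1 := by
  rw [Nat.sInf_upward_closed_eq_succ_iff (s := {n | b ∈ M.closure {x ∈ I | ord x < n}})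
    fun _ _ h hm => monotone_closure_setOf_mem_lt M I ord h hm]
  refine ⟨M.subset_closure _ (fun x hx => hI.subset_ground hx.1) ⟨hb, Nat.lt_succ_self _⟩,
    fun hcl => hI.notMem_closure_sdiff_of_mem hb (M.closure_subset_closure ?_ hcl)⟩
  exact fun x hx => ⟨hx.1, fun hxb => hx.2.ne (congrArg ord hxb)⟩

theorem Matroid.IsBase.exists_isGallaiColoring_ncard_image_eq [M.RankFinite] [M.Loopless]
    [Countable α] {B : Set α} (hB : M.IsBase B) :
    ∃ ε : α → ℕ, IsGallaiColoring M ε ∧ (ε '' B).ncard = B.ncard := by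
  obtain ⟨ord, hord⟩ := Countable.exists_injective_nat α
  obtain ⟨N, hN⟩ := (hB.finite.image ord).bddAbove
  have hcover : ∀ e ∈ M.E, e ∈ M.closure {b ∈ B | ord b < N + 1} := fun e he => by
    rwa [sep_eq_self_iff_mem_true.2 fun b hb => Nat.lt_succ_of_le (hN (mem_image_of_mem ord hb)),
      hB.closure_eq]
  refine ⟨_, isGallaiColoring_sInf_mem_of_monotone_isFlat (monotone_closure_setOf_mem_lt M B ord)
    (fun _ => M.isFlat_closure _) fun e he => ⟨N + 1, hcover e he⟩, InjOn.ncard_image ?_⟩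
  intro b hb b' hb' h
  simp only [hB.indep.sInf_mem_closure_setOf_mem_lt hb,
    hB.indep.sInf_mem_closure_setOf_mem_lt hb', Nat.add_right_cancel_iff] at h
  exact hord h

end

/-- For a loopless matroid `M` on a finite ground set, the maximal number of colors
used by a Gallai coloring of `M` equals the rank of `M` (the common size of its
bases): for every base `B`, the cardinality of `B` is the greatest `k` such that
some Gallai coloring of `M` uses exactly `k` colors. -/
theorem gallai_max_colors_eq_rank {α : Type*} [Fintype α] (M : Matroid α)
    (hE : M.E = Set.univ)
    (hloopless : ∀ C, IsCircuit M C → C.ncard ≠ 1)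
    (B : Set α) (hB : M.IsBase B) :
    IsGreatest {k : ℕ | ∃ ε : α → ℕ,
      IsGallaiColoring M ε ∧ (Set.range ε).ncard = k} B.ncard := by
  have : M.Loopless := loopless_of_forall_isCircuit_ncard_ne_one hloopless
  have hle : ∀ ε : α → ℕ, IsGallaiColoring M ε → (range ε).ncard ≤ B.ncard := fun ε hε => by
    simpa only [hE, image_univ] using hε.ncard_image_ground_le hB
  obtain ⟨ε, hε, hεB⟩ := hB.exists_isGallaiColoring_ncard_image_eq
  refine ⟨⟨ε, hε, (hle ε hε).antisymm ?_⟩, ?_⟩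
  · exact hεB ▸ ncard_le_ncard (image_subset_range ε B)
  · rintro k ⟨ε', hε', rfl⟩
    exact hle ε' hε'
end

section
/- For every n ≥ 1, the maximal number of colors used by a transitive coloring of the transitive tournament on n vertices equals n − 1. Precisely, n − 1 is the greatest element of the set of natural numbers k for which there exists a transitive coloring ε of the edges {(i,j) : 1 ≤ i < j ≤ n} whose image has exactly k elements. -/
/-!
Every color of a transitive coloring already occurs on one of the `n - 1` edges `(j, j + 1)`:
by transitivity, `ε(i, k)` is either `ε(i, i + 1)` or `ε(i + 1, k)`, and iterating along the
path `i, i + 1, …, k` lands on a consecutive edge. Conversely, coloring each edge by its head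
is transitive and uses the `n - 1` colors `1, …, n - 1`.
-/

/-- The edge set of the transitive tournament on `n` vertices:
ordered pairs `(i, j)` with `i < j`. -/
abbrev TournEdge (n : ℕ) := {p : Fin n × Fin n // p.1 < p.2}

/-- The edge `(a, b)` of the transitive tournament, for `a < b`. -/
def te {n : ℕ} (a b : Fin n) (h : a < b) : TournEdge n := ⟨(a, b), h⟩

/-- A coloring of the edges of the transitive tournament is transitive if
`ε(i,k) ∈ {ε(i,j), ε(j,k)}` for all `i < j < k`. -/
def IsTransitiveColoring {n : ℕ} {C : Type*} (ε : TournEdge n → C) : Prop :=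
  ∀ (i j k : Fin n) (hij : i < j) (hjk : j < k),
    ε (te i k (hij.trans hjk)) = ε (te i j hij) ∨
      ε (te i k (hij.trans hjk)) = ε (te j k hjk)

namespace TournEdge

def step {n : ℕ} (j : Fin (n - 1)) : TournEdge n :=
  te ⟨j, by omega⟩ ⟨j + 1, by omega⟩ (by simp [Fin.lt_def])

lemma range_head_val (n : ℕ) :
    Set.range (fun e : TournEdge n => (e.1.2 : ℕ)) = Set.Ico 1 n := by
  ext m
  constructor
  · rintro ⟨⟨⟨i, j⟩, hij⟩, rfl⟩
    have : (i : ℕ) < j := hij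
    exact ⟨show 1 ≤ (j : ℕ) by omega, j.isLt⟩
  · rintro ⟨h1, hm⟩
    exact ⟨⟨(⟨0, by omega⟩, ⟨m, hm⟩), by simp [Fin.lt_def]; omega⟩, rfl⟩

end TournEdge

lemma isTransitiveColoring_comp_head {n : ℕ} {C : Type*} (f : Fin n → C) :
    IsTransitiveColoring (fun e : TournEdge n => f e.1.2) :=
  fun _ _ _ _ _ => Or.inr rfl

namespace IsTransitiveColoring

variable {n : ℕ} {C : Type*} {ε : TournEdge n → C}

lemma exists_step_eq (hε : IsTransitiveColoring ε) (d : ℕ) :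
    ∀ (i k : Fin n) (h : i < k), (k : ℕ) = i + d + 1 →
      ∃ j : Fin (n - 1), ε (te i k h) = ε (TournEdge.step j) := by
  induction d with
  | zero =>
    intro i k h hk
    exact ⟨⟨i, by omega⟩, by congr 1; ext <;> simp [te, TournEdge.step, hk]⟩
  | succ d ih =>
    intro i k h hk
    let i' : Fin n := ⟨i + 1, by omega⟩
    have hii' : i < i' := by simp [i', Fin.lt_def]
    have hi'k : i' < k := by simp [i', Fin.lt_def]; omega
    rcases hε i i' k hii' hi'k with hc | hc
    · exact ⟨⟨i, by omega⟩, hc⟩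
    · obtain ⟨j, hj⟩ := ih i' k hi'k (by simp [i']; omega)
      exact ⟨j, hc.trans hj⟩

lemma range_subset_range_step (hε : IsTransitiveColoring ε) :
    Set.range ε ⊆ Set.range (ε ∘ TournEdge.step) := by
  rintro _ ⟨⟨⟨i, k⟩, h⟩, rfl⟩
  obtain ⟨j, hj⟩ := hε.exists_step_eq (k - i - 1) i k h (by have : (i : ℕ) < k := h; omega)
  exact ⟨j, hj.symm⟩

lemma ncard_range_le (hε : IsTransitiveColoring ε) : (Set.range ε).ncard ≤ n - 1 :=
  calc (Set.range ε).ncard ≤ (Set.range (ε ∘ TournEdge.step)).ncard :=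
        Set.ncard_le_ncard hε.range_subset_range_step (Set.finite_range _)
    _ ≤ Nat.card (Fin (n - 1)) := Finite.card_range_le _
    _ = n - 1 := Nat.card_fin _

end IsTransitiveColoring

theorem max_colors_transitive_tournament_general (n : ℕ) :
    IsGreatest {k : ℕ | ∃ ε : TournEdge n → ℕ,
      IsTransitiveColoring ε ∧ (Set.range ε).ncard = k} (n - 1) := by
  refine ⟨⟨_, isTransitiveColoring_comp_head Fin.val, ?_⟩, ?_⟩
  · rw [TournEdge.range_head_val, Set.ncard_Ico_nat]
  · rintro k ⟨ε, hε, rfl⟩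
    exact hε.ncard_range_le

/-- The maximal number of colors used by a transitive coloring of the transitive
tournament on `n ≥ 1` vertices equals `n - 1`. -/
theorem max_colors_transitive_tournament (n : ℕ) (hn : 1 ≤ n) :
    IsGreatest {k : ℕ | ∃ ε : TournEdge n → ℕ,
      IsTransitiveColoring ε ∧ (Set.range ε).ncard = k} (n - 1) :=
  max_colors_transitive_tournament_general n
end

section
/- Let M be a matroid on a finite nonempty ground set E. For each j ≥ 1, let a_j be the number of Gallai j-partitions of M, i.e., partitions of E into exactly j nonempty blocks B_1,…,B_j such that every circuit X of M satisfies |X ∩ B_i| ≥ 2 for at least one i. Then for every positive integer k, the number of Gallai colorings ε : E → {1,…,k} of M equals Σ_{j ≥ 1} a_j · k(k−1)⋯(k−j+1), where k(k−1)⋯(k−j+1) is the falling factorial. -/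
/-- A Gallai partition of a matroid: a partition of the ground set (encoded as a
setoid, whose classes are the nonempty blocks) such that every circuit `X`
satisfies `|X ∩ B| ≥ 2` for at least one block `B`, i.e. every circuit contains
two distinct elements lying in a common block. -/
def IsGallaiPartition {α : Type*} (M : Matroid α) (S : Setoid α) : Prop :=
  ∀ X, IsCircuit M X → ∃ e ∈ X, ∃ f ∈ X, e ≠ f ∧ S.r e f

/-!
A coloring `ε` is Gallai exactly when its kernel partition is: a circuit `X` receives fewer than
`|X|` colors iff two of its elements share a color. Colorings with a prescribed kernel `S` are
the injections of the blocks of `S` into the colors, so there are `k(k-1)⋯(k-j+1)` of them when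
`S` has `j` blocks. Summing over Gallai partitions, grouped by their number of blocks, gives
the formula.
-/

open Finset

theorem Set.ncard_image_lt_ncard_iff {α β : Type*} {s : Set α} (f : α → β) (hs : s.Finite) :
    (f '' s).ncard < s.ncard ↔ ∃ a ∈ s, ∃ b ∈ s, a ≠ b ∧ f a = f b := by
  rw [(Set.ncard_image_le hs).lt_iff_ne, Ne, Set.ncard_image_iff hs, Set.InjOn]
  grind

namespace Setoid

variable {α β : Type*}

instance [Finite α] : Finite (Setoid α) :=
  Finite.of_injective _ fun _ _ => eq_iff_rel_eq.2

noncomputable def kerEqEquivEmbedding (S : Setoid α) :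
    {f : α → β // ker f = S} ≃ (Quotient S ↪ β) where
  toFun f := ⟨Quotient.lift f.1 f.2.ge, (lift_injective_iff_ker_eq_of_le f.2.ge).2 f.2⟩
  invFun g := ⟨g ∘ Quotient.mk S, by
    refine ker_eq_lift_of_injective _ (fun a b h => congrArg g (Quotient.sound h)) ?_
    rintro ⟨a⟩ ⟨b⟩ h
    exact g.injective h⟩
  left_inv _ := rfl
  right_inv g := by
    ext ⟨a⟩
    rfl

theorem card_subtype_ker [Finite α] [Fintype (Setoid α)] [Finite β] (P : Setoid α → Prop)
    [DecidablePred P] :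
    Nat.card {f : α → β // P (ker f)} =
      ∑ S with P S, (Nat.card β).descFactorial (Nat.card (Quotient S)) := by
  have := Fintype.ofFinite β
  rw [← Nat.card_congr (Equiv.sigmaSubtypeFiberEquivSubtype ker fun _ => Iff.rfl),
    Nat.card_sigma, sum_subtype _ (p := P) (by simp)]
  refine Fintype.sum_congr _ _ fun S => ?_
  have := Fintype.ofFinite (Quotient S.1)
  rw [Nat.card_congr (kerEqEquivEmbedding S.1), Nat.card_eq_fintype_card,
    Fintype.card_embedding_eq, Nat.card_eq_fintype_card, Nat.card_eq_fintype_card]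

end Setoid

theorem isGallaiColoring_iff_isGallaiPartition_ker {α C : Type*} [Finite α] (M : Matroid α)
    (ε : α → C) : IsGallaiColoring M ε ↔ IsGallaiPartition M (Setoid.ker ε) :=
  forall₂_congr fun X _ => Set.ncard_image_lt_ncard_iff ε X.toFinite

theorem card_gallai_colorings_eq_sum_descFactorial_general {α : Type*} [Fintype α]
    [Nonempty α] (M : Matroid α)
    (a : ℕ → ℕ)
    (ha : ∀ j, a j = Nat.card {S : Setoid α //
      Nat.card (Quotient S) = j ∧ IsGallaiPartition M S})
    (k : ℕ) :
    Nat.card {ε : α → Fin k // IsGallaiColoring M ε} =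
      ∑ᶠ j ∈ Set.Ici 1, a j * Nat.descFactorial k j := by
  classical
  have := Fintype.ofFinite (Setoid α)
  have hcount : ∀ j, #{S ∈ {S | IsGallaiPartition M S} | Nat.card (Quotient S) = j} = a j := by
    intro j
    rw [ha, Nat.card_eq_fintype_card, Fintype.card_subtype, filter_filter]
    simp only [and_comm]
  rw [Nat.card_congr (Equiv.subtypeEquivRight (isGallaiColoring_iff_isGallaiPartition_ker M)),
    Setoid.card_subtype_ker, Nat.card_fin, sum_comp]
  simp only [hcount, smul_eq_mul]
  symm
  refine finsum_mem_eq_sum_of_subset _ ?_ ?_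
  · rintro j ⟨-, hj⟩
    obtain ⟨⟨S, hSj, hS⟩⟩ := (Nat.card_ne_zero.1 (ha j ▸ left_ne_zero_of_mul hj)).1
    exact mem_image.2 ⟨S, by simpa using hS, hSj⟩
  · intro j hj
    obtain ⟨S, -, rfl⟩ := mem_image.1 hj
    have : Nonempty (Quotient S) := .map (Quotient.mk S) ‹_›
    exact Nat.card_pos

/-- For a matroid `M` on a finite nonempty ground set, the number of Gallai
colorings of `M` with colors in `{1, …, k}` equals
`Σ_{j ≥ 1} a_j · k(k-1)⋯(k-j+1)`, where `a_j` is the number of Gallai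
`j`-partitions of `M` and `k(k-1)⋯(k-j+1)` is the falling factorial. -/
theorem card_gallai_colorings_eq_sum_descFactorial {α : Type*} [Fintype α]
    [Nonempty α] (M : Matroid α) (hE : M.E = Set.univ)
    (a : ℕ → ℕ)
    (ha : ∀ j, a j = Nat.card {S : Setoid α //
      Nat.card (Quotient S) = j ∧ IsGallaiPartition M S})
    (k : ℕ) (hk : 1 ≤ k) :
    Nat.card {ε : α → Fin k // IsGallaiColoring M ε} =
      ∑ᶠ j ∈ Set.Ici 1, a j * Nat.descFactorial k j :=
  card_gallai_colorings_eq_sum_descFactorial_general M a ha k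
end

section
/- Let E be a finite set of vectors in ℝ^d such that 0 does not lie in the convex hull of E. Call a function ε : E → {−1, +1} transitive if for all nonempty disjoint subsets S, T ⊆ E for which there exist strictly positive real coefficients (a_s)_{s∈S} and (b_t)_{t∈T} with Σ_{s∈S} a_s s = Σ_{t∈T} b_t t, there exist s ∈ S and t ∈ T with ε(s) = ε(t). Then the number of transitive functions ε : E → {−1, +1} equals the number of functions σ : E → {−1, +1} for which there exists a point x ∈ ℝ^d with σ(e)·⟨x, e⟩ > 0 for every e ∈ E (such σ are exactly the sign vectors of the chambers of the hyperplane arrangement {e^⊥ : e ∈ E}, so this number is the number of chambers of the dual arrangement). -/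
/-!
A sign vector `ε` is realized by a chamber exactly when some `x` has `0 < ⟪x, ε e • e⟫` for all
`e`, i.e. (by separation) when `0` is not in the convex hull of the reoriented vectors `ε e • e`.
Transitivity is precisely the obstruction to `0` lying in that hull: a convex combination
`∑ w e • ε e • e = 0` splits, according to the sign `ε e`, into two equal positive combinations of
disjoint sets `S` and `T`, and both are nonempty because `0 ∉ convexHull E`. Conversely, if `x`
lies in the chamber of `ε` and `ε` is `c` on `S` and `-c` on `T`, then `c * ⟪x, ·⟫` is positive on
positive combinations of `S` and negative on those of `T`, so no two of them coincide.
-/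

/-- A `±1`-valued function on a finite set `E` of vectors is transitive if, whenever
two nonempty disjoint subsets `S, T ⊆ E` admit strictly positive coefficients with
equal positive combinations (`Σ_{s∈S} a_s s = Σ_{t∈T} b_t t`), some `s ∈ S` and
`t ∈ T` receive the same sign. -/
def IsTransitiveSign {d : ℕ} (E : Finset (EuclideanSpace ℝ (Fin d)))
    (ε : E → ℝ) : Prop :=
  ∀ S T : Finset E, S.Nonempty → T.Nonempty → Disjoint S T →
    (∃ (a b : E → ℝ), (∀ s ∈ S, 0 < a s) ∧ (∀ t ∈ T, 0 < b t) ∧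
      ∑ s ∈ S, a s • (s : EuclideanSpace ℝ (Fin d)) =
        ∑ t ∈ T, b t • (t : EuclideanSpace ℝ (Fin d))) →
    ∃ s ∈ S, ∃ t ∈ T, ε s = ε t

open Finset

lemma eq_neg_of_ne_of_eq_one_or_eq_neg_one {a b : ℝ} (ha : a = 1 ∨ a = -1)
    (hb : b = 1 ∨ b = -1) (hab : a ≠ b) : a = -b := by
  rcases ha with rfl | rfl <;> rcases hb with rfl | rfl <;> simp_all

section InnerProductSpace

variable {F : Type*} [NormedAddCommGroup F] [InnerProductSpace ℝ F]

lemma mul_inner_sum_smul_pos {ι : Type*} {S : Finset ι} (hS : S.Nonempty) {a : ι → ℝ}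
    {v : ι → F} {c : ℝ} {x : F} (ha : ∀ i ∈ S, 0 < a i)
    (hv : ∀ i ∈ S, 0 < c * inner ℝ x (v i)) :
    0 < c * inner ℝ x (∑ i ∈ S, a i • v i) := by
  rw [inner_sum, Finset.mul_sum]
  refine Finset.sum_pos (fun i hi => ?_) hS
  rw [real_inner_smul_right, mul_left_comm]
  exact mul_pos (ha i hi) (hv i hi)

lemma exists_inner_pos_of_zero_notMem_convexHull [CompleteSpace F] {s : Set F}
    (hs : s.Finite) (h : (0 : F) ∉ convexHull ℝ s) : ∃ x : F, ∀ v ∈ s, 0 < inner ℝ x v := by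
  obtain ⟨f, u, hu, hf⟩ :=
    geometric_hahn_banach_point_closed (convex_convexHull ℝ s)
      (hs.isCompact_convexHull (𝕜 := ℝ)).isClosed h
  refine ⟨(InnerProductSpace.toDual ℝ F).symm f, fun v hv => ?_⟩
  rw [InnerProductSpace.toDual_symm_apply]
  linarith [hf v (subset_convexHull ℝ s hv), map_zero f]

end InnerProductSpace

lemma exists_mem_stdSimplex_of_mem_convexHull_range {ι M : Type*} [Fintype ι]
    [AddCommGroup M] [Module ℝ M] {v : ι → M} {y : M}
    (hy : y ∈ convexHull ℝ (Set.range v)) :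
    ∃ w ∈ stdSimplex ℝ ι, ∑ i, w i • v i = y := by
  classical
  have hv : Set.range v ⊆ Fintype.linearCombination ℝ v '' stdSimplex ℝ ι := by
    rintro _ ⟨i, rfl⟩
    exact ⟨Pi.single i 1, single_mem_stdSimplex ℝ i, by simp⟩
  simpa [Fintype.linearCombination_apply] using
    convexHull_min hv ((convex_stdSimplex ℝ ι).linear_image _) hy

section Signs

variable {d : ℕ} {E : Finset (EuclideanSpace ℝ (Fin d))} {ε : E → ℝ}

local notation "V" => EuclideanSpace ℝ (Fin d)

lemma isTransitiveSign_of_pos_mul_inner (hpm : ∀ e, ε e = 1 ∨ ε e = -1)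
    {x : V} (hx : ∀ e : E, 0 < ε e * inner ℝ x (e : V)) :
    IsTransitiveSign E ε := by
  rintro S T ⟨s₀, hs₀⟩ ⟨t₀, ht₀⟩ - ⟨a, b, ha, hb, hab⟩
  by_contra! hne
  have hS : ∀ s ∈ S, ε s = -ε t₀ := fun s hs =>
    eq_neg_of_ne_of_eq_one_or_eq_neg_one (hpm s) (hpm t₀) (hne s hs t₀ ht₀)
  have hT : ∀ t ∈ T, ε t = ε t₀ := fun t ht => by
    simpa [hS s₀ hs₀] using
      eq_neg_of_ne_of_eq_one_or_eq_neg_one (hpm t) (hpm s₀) (hne s₀ hs₀ t ht).symm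
  have hSpos := mul_inner_sum_smul_pos ⟨s₀, hs₀⟩ ha fun s hs => hS s hs ▸ hx s
  have hTpos := mul_inner_sum_smul_pos ⟨t₀, ht₀⟩ hb fun t ht => hT t ht ▸ hx t
  rw [hab] at hSpos
  linarith

lemma zero_notMem_convexHull_smul_of_isTransitiveSign
    (hE : (0 : V) ∉ convexHull ℝ (E : Set V))
    (hpm : ∀ e, ε e = 1 ∨ ε e = -1) (htr : IsTransitiveSign E ε) :
    (0 : V) ∉ convexHull ℝ (Set.range fun e : E => ε e • (e : V)) := by
  classical
  intro h0
  obtain ⟨w, ⟨hw₀, hw₁⟩, hw⟩ := exists_mem_stdSimplex_of_mem_convexHull_range h0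
  set S := univ.filter fun e => 0 < w e ∧ ε e = 1
  set T := univ.filter fun e => 0 < w e ∧ ¬ε e = 1
  have hsplit (g : E → V) (hg : ∀ e, w e = 0 → g e = 0) :
      ∑ e, g e = ∑ e ∈ S, g e + ∑ e ∈ T, g e := by
    have hg' (e : E) (_ : e ∈ univ) (he : g e ≠ 0) : 0 < w e := (hw₀ e).lt_of_ne' (mt (hg e) he)
    rw [← sum_filter_of_ne hg', ← sum_filter_add_sum_filter_not _ fun e => ε e = 1, filter_filter,
      filter_filter]
  have hST : ∑ e ∈ S, w e • (e : V) = ∑ e ∈ T, w e • (e : V) := by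
    have hsmul := hsplit (fun e : E => w e • ε e • (e : V)) (by simp_all)
    have hS' : ∑ e ∈ S, w e • ε e • (e : V) = ∑ e ∈ S, w e • (e : V) :=
      sum_congr rfl fun e he => by rw [(mem_filter.1 he).2.2, one_smul]
    have hT' : ∑ e ∈ T, w e • ε e • (e : V) = -∑ e ∈ T, w e • (e : V) := by
      rw [← sum_neg_distrib]
      exact sum_congr rfl fun e he => by
        rw [(hpm e).resolve_left (mem_filter.1 he).2.2, neg_one_smul, smul_neg]
    rw [hw, hS', hT', ← sub_eq_add_neg, eq_comm, sub_eq_zero] at hsmul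
    exact hsmul
  have hsum := hsplit (fun e : E => w e • (e : V)) (by simp_all)
  have hne : ∑ e, w e • (e : V) ≠ 0 := fun h =>
    hE (h ▸ mem_convexHull_of_exists_fintype w _ hw₀ hw₁ (fun e => e.2) rfl)
  have hS : S.Nonempty := Finset.nonempty_iff_ne_empty.2 fun hS => hne (by
    rw [hsum, ← hST, hS, sum_empty, add_zero])
  have hT : T.Nonempty := Finset.nonempty_iff_ne_empty.2 fun hT => hne (by
    rw [hsum, hST, hT, sum_empty, zero_add])
  have hdisj : Disjoint S T := disjoint_filter.2 fun e _ hS hT => hT.2 hS.2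
  obtain ⟨s, hs, t, ht, hst⟩ := htr S T hS hT hdisj
    ⟨w, w, fun s hs => (mem_filter.1 hs).2.1, fun t ht => (mem_filter.1 ht).2.1, hST⟩
  exact (mem_filter.1 ht).2.2 (hst ▸ (mem_filter.1 hs).2.2)

end Signs

/-- Let `E` be a finite set of vectors in `ℝ^d` with `0` not in the convex hull of
`E`.  The number of transitive functions `ε : E → {−1, +1}` equals the number of
functions `σ : E → {−1, +1}` realized as the sign vector of some point `x ∈ ℝ^d`
(i.e. with `σ(e)·⟨x, e⟩ > 0` for all `e ∈ E`); the latter is the number of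
chambers of the hyperplane arrangement dual to `E`. -/
theorem card_transitive_signs_eq_card_chambers (d : ℕ)
    (E : Finset (EuclideanSpace ℝ (Fin d)))
    (hE : (0 : EuclideanSpace ℝ (Fin d)) ∉ convexHull ℝ (E : Set (EuclideanSpace ℝ (Fin d)))) :
    Nat.card {ε : E → ℝ //
        (∀ e, ε e = 1 ∨ ε e = -1) ∧ IsTransitiveSign E ε} =
      Nat.card {σ : E → ℝ //
        (∀ e, σ e = 1 ∨ σ e = -1) ∧
        ∃ x : EuclideanSpace ℝ (Fin d), ∀ e : E,
          0 < σ e * (inner ℝ x (e : EuclideanSpace ℝ (Fin d)) : ℝ)} := by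
  refine Nat.card_congr (Equiv.subtypeEquivRight fun ε => and_congr_right fun hpm => ?_)
  refine ⟨fun htr => ?_, fun ⟨x, hx⟩ => isTransitiveSign_of_pos_mul_inner hpm hx⟩
  obtain ⟨x, hx⟩ := exists_inner_pos_of_zero_notMem_convexHull (Set.finite_range _)
    (zero_notMem_convexHull_smul_of_isTransitiveSign hE hpm htr)
  exact ⟨x, fun e => by simpa [real_inner_smul_right] using hx _ (Set.mem_range_self e)⟩
end

section
/- For every n ≥ 1, the number of transitive 2-colorings of the transitive tournament on n vertices, i.e., the number of functions ε : {(i,j) : 1 ≤ i < j ≤ n} → {1,2} such that ε(i,k) ∈ {ε(i,j), ε(j,k)} for all 1 ≤ i < j < k ≤ n, equals n!. -/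
/-!
A permutation `σ` colors the edge `(i, j)` by whether `σ` increases along it. Such a coloring is
transitive, and it determines `σ`, since it records the relative order of any two values of `σ`.
Conversely, a transitive 2-coloring `ε` defines a relation "`i` precedes `j`" (color 0 on `(i, j)`
puts `i` first, color 1 puts `j` first), which the transitivity of `ε` makes a strict total order;
numbering the vertices along it gives a permutation inducing `ε`. Hence transitive 2-colorings are
in bijection with the `n!` permutations of the vertices.
-/

theorem exists_equiv_fin_lt_iff {α : Type*} [Fintype α] (r : α → α → Prop)
    [IsStrictTotalOrder α r] {k : ℕ} (h : Fintype.card α = k) :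
    ∃ σ : α ≃ Fin k, ∀ a b, r a b ↔ σ a < σ b := by
  classical
  let := linearOrderOfSTO r
  exact ⟨(monoEquivOfFin α h).symm.toEquiv, fun a b => (monoEquivOfFin α h).symm.lt_iff_lt.symm⟩

section

variable {n : ℕ}

def coloringOf {α : Type*} [LinearOrder α] (f : Fin n → α) : TournEdge n → Fin 2 :=
  fun e => if f e.1.1 < f e.1.2 then 0 else 1

theorem isTransitiveColoring_coloringOf {α : Type*} [LinearOrder α] (f : Fin n → α) :
    IsTransitiveColoring (coloringOf f) := by
  intro i j k _ _
  simp only [coloringOf, te]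
  by_cases hik : f i < f k <;> by_cases hij : f i < f j <;> by_cases hjk : f j < f k <;>
    simp [hik, hij, hjk] <;> order

theorem lt_iff_lt_of_coloringOf_eq {α : Type*} [LinearOrder α] {f g : Fin n → α}
    (hf : Function.Injective f) (hg : Function.Injective g) (h : coloringOf f = coloringOf g)
    (i j : Fin n) : f i < f j ↔ g i < g j := by
  have of_lt : ∀ {i j : Fin n} (hij : i < j), f i < f j ↔ g i < g j := fun {i j} hij => by
    have := congrFun h (te i j hij)
    simp only [coloringOf, te] at this
    by_cases hfij : f i < f j <;> by_cases hgij : g i < g j <;> simp [hfij, hgij] at this ⊢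
  rcases lt_trichotomy i j with hij | rfl | hji
  · exact of_lt hij
  · simp
  · rw [← (hf.ne hji.ne').le_iff_lt, ← not_lt, of_lt hji, not_lt, (hg.ne hji.ne').le_iff_lt]

theorem coloringOf_perm_injective :
    Function.Injective fun σ : Equiv.Perm (Fin n) => coloringOf σ := by
  intro σ τ h
  have hmono : StrictMono (τ ∘ σ.symm) := fun a b hab =>
    (lt_iff_lt_of_coloringOf_eq σ.injective τ.injective h _ _).1 (by simpa using hab)
  ext i : 1
  simpa using (congrFun hmono.eq_id (σ i)).symm

def Precedes (ε : TournEdge n → Fin 2) (i j : Fin n) : Prop :=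
  (∃ h : i < j, ε (te i j h) = 0) ∨ ∃ h : j < i, ε (te j i h) = 1

section Precedes

variable {ε : TournEdge n → Fin 2} {i j k : Fin n}

theorem precedes_iff_of_lt (h : i < j) : Precedes ε i j ↔ ε (te i j h) = 0 := by
  simp [Precedes, h, h.not_gt]

theorem precedes_iff_of_gt (h : j < i) : Precedes ε i j ↔ ε (te j i h) = 1 := by
  simp [Precedes, h, h.not_gt]

theorem precedes_irrefl (i : Fin n) : ¬Precedes ε i i := by
  simp [Precedes]

theorem precedes_or_precedes_of_ne (h : i ≠ j) : Precedes ε i j ∨ Precedes ε j i := by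
  rcases h.lt_or_gt with hij | hji
  · rw [precedes_iff_of_lt hij, precedes_iff_of_gt hij]; omega
  · rw [precedes_iff_of_gt hji, precedes_iff_of_lt hji]; omega

theorem IsTransitiveColoring.precedes_trans (hε : IsTransitiveColoring ε)
    (hij : Precedes ε i j) (hjk : Precedes ε j k) : Precedes ε i k := by
  have hij' : i ≠ j := by rintro rfl; exact precedes_irrefl _ hij
  have hjk' : j ≠ k := by rintro rfl; exact precedes_irrefl _ hjk
  rcases hij'.lt_or_gt with h1 | h1 <;> rcases hjk'.lt_or_gt with h2 | h2 <;>
    rcases lt_trichotomy i k with h3 | h3 | h3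
  all_goals first
    | (exfalso; order)
    | (subst h3; simp only [precedes_iff_of_lt, precedes_iff_of_gt, h1] at hij hjk; omega)
    | skip
  -- apply transitivity to the triple sorted by index; its consecutive pairs are among `h1 h2 h3`
  all_goals
    first
    | have := hε i j k h1 h2
    | have := hε i k j h3 h2
    | have := hε j i k h1 h3
    | have := hε j k i h2 h3
    | have := hε k i j h3 h1
    | have := hε k j i h2 h1
    simp only [precedes_iff_of_lt, precedes_iff_of_gt, h1, h2, h3] at hij hjk this ⊢
    omega

end Precedes

theorem IsTransitiveColoring.exists_perm_coloringOf_eq {ε : TournEdge n → Fin 2}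
    (hε : IsTransitiveColoring ε) : ∃ σ : Equiv.Perm (Fin n), coloringOf σ = ε := by
  have : IsStrictTotalOrder (Fin n) (Precedes ε) :=
    { irrefl := precedes_irrefl
      trans := fun _ _ _ => hε.precedes_trans
      trichotomous := fun i j hij hji => by
        by_contra hne
        exact (precedes_or_precedes_of_ne hne).elim hij hji }
  obtain ⟨σ, hσ⟩ := exists_equiv_fin_lt_iff (Precedes ε) (Fintype.card_fin n)
  refine ⟨σ, funext fun ⟨(i, j), hij⟩ => ?_⟩
  have hcolor : σ i < σ j ↔ ε ⟨(i, j), hij⟩ = 0 := (hσ i j).symm.trans (precedes_iff_of_lt hij)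
  rw [coloringOf]
  split_ifs with h
  · exact (hcolor.1 h).symm
  · have := mt hcolor.2 h
    omega

end

theorem card_transitive_two_colorings_general (n : ℕ) :
    Nat.card {ε : TournEdge n → Fin 2 // IsTransitiveColoring ε} = Nat.factorial n := by
  have hbij : Function.Bijective fun σ : Equiv.Perm (Fin n) =>
      (⟨coloringOf σ, isTransitiveColoring_coloringOf σ⟩ :
        {ε : TournEdge n → Fin 2 // IsTransitiveColoring ε}) :=
    ⟨fun σ τ h => coloringOf_perm_injective (congrArg Subtype.val h),
      fun ⟨_, hε⟩ => hε.exists_perm_coloringOf_eq.imp fun _ hσ => Subtype.ext hσ⟩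
  rw [← Nat.card_eq_of_bijective _ hbij, Nat.card_perm, Nat.card_fin]

/-- The number of transitive 2-colorings of the transitive tournament on `n ≥ 1`
vertices equals `n!`. -/
theorem card_transitive_two_colorings (n : ℕ) (hn : 1 ≤ n) :
    Nat.card {ε : TournEdge n → Fin 2 // IsTransitiveColoring ε} = Nat.factorial n :=
  card_transitive_two_colorings_general n
end
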